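/- Assume condition (RV) with tail index α > 2. Then P( W_{(1)}(n)² ≤ L(n) ) → 1 as n → ∞. -/

import Mathlib

open MeasureTheory ProbabilityTheory Filter Real

noncomputable section

/-- `F` is a continuous CDF supported on `(0, ∞)`. -/
def IsCDF (F : ℝ → ℝ) : Prop :=
  Monotone F ∧ Continuous F ∧ (∀ x ≤ (0:ℝ), F x = 0) ∧ Tendsto F atTop (nhds 1)

/-- Generalized inverse `F^←(y) = inf {x | F x ≥ y}`. -/
noncomputable def Finv (F : ℝ → ℝ) (y : ℝ) : ℝ := sInf {x | y ≤ F x}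

/-- `U(t) = F^←(1 - 1/t)`. -/
noncomputable def Ufun (F : ℝ → ℝ) (t : ℝ) : ℝ := Finv F (1 - 1/t)

/-- Condition (RV): regular variation of `U` with index `γ = 1/α`. -/
def CondRV (F : ℝ → ℝ) (α : ℝ) : Prop :=
  ∀ x : ℝ, 0 < x →
    Tendsto (fun t => Ufun F (t * x) / Ufun F t) atTop (nhds (x ^ (1/α)))

/-- Condition (UL) with parameters `t₀` and `η`. -/
def CondUL (F : ℝ → ℝ) (α t₀ η : ℝ) : Prop :=
  0 < t₀ ∧ 0 ≤ η ∧ η < 1 ∧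
  ∀ t ≥ t₀, ∀ x ≥ (1:ℝ), (1 - η) * x ^ (1/α) + η ≤ Ufun F (t * x) / Ufun F t

variable {Ω : Type*} [mΩ : MeasurableSpace Ω]

/-- `W 1, W 2, …` are i.i.d. with distribution function `F`. -/
def IIDWith (P : Measure Ω) (F : ℝ → ℝ) (W : ℕ → Ω → ℝ) : Prop :=
  (∀ i, Measurable (W i)) ∧
  iIndepFun W P ∧
  ∀ i (x : ℝ), P {ω | W i ω ≤ x} = ENNReal.ofReal (F x)

/-- `Wo n 1 ≥ Wo n 2 ≥ … ≥ Wo n n` are the decreasing order statistics of `W 1, …, W n`. -/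
def IsOrderStats (W : ℕ → Ω → ℝ) (Wo : ℕ → ℕ → Ω → ℝ) : Prop :=
  (∀ n i, Measurable (Wo n i)) ∧
  (∀ n (ω : Ω), ∀ i ∈ Finset.Icc 1 n, ∀ j ∈ Finset.Icc 1 n, i ≤ j → Wo n j ω ≤ Wo n i ω) ∧
  (∀ n (ω : Ω), (Finset.Icc 1 n).val.map (fun i => Wo n i ω)
      = (Finset.Icc 1 n).val.map (fun i => W i ω))

/-- The σ-algebra generated by the order statistics `(Wo n 1, …, Wo n n)`. -/
def weightSigma (Wo : ℕ → ℕ → Ω → ℝ) (n : ℕ) : MeasurableSpace Ω :=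
  MeasurableSpace.comap (fun ω (i : Fin n) => Wo n ((i : ℕ) + 1) ω) inferInstance

/-- Norros–Reittu degree hypothesis: conditionally on the weights, `D n i` is Poisson
with mean `Wo n i`. -/
def NorrosReittu (P : Measure Ω) (Wo : ℕ → ℕ → Ω → ℝ) (D : ℕ → ℕ → Ω → ℕ) : Prop :=
  (∀ n i, Measurable (D n i)) ∧
  ∀ n, ∀ i ∈ Finset.Icc 1 n, ∀ k : ℕ,
    (P[Set.indicator {ω | D n i ω = k} (fun _ => (1:ℝ)) | weightSigma Wo n]) =ᵐ[P]
      fun ω => Real.exp (-(Wo n i ω)) * (Wo n i ω)^k / (Nat.factorial k)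

/-- Chung–Lu degree hypothesis. -/
def ChungLu (P : Measure Ω) [IsFiniteMeasure P] [StandardBorelSpace Ω]
    (W : ℕ → Ω → ℝ) (Wo : ℕ → ℕ → Ω → ℝ)
    (A : ℕ → ℕ → ℕ → Ω → ℕ) (D : ℕ → ℕ → Ω → ℕ) : Prop :=
  (∀ n i j, Measurable (A n i j)) ∧
  (∀ n i j (ω : Ω), A n i j ω ≤ 1) ∧
  (∀ n i j (ω : Ω), A n j i ω = A n i j ω) ∧
  (∀ n i (ω : Ω), D n i ω = ∑ j ∈ Finset.Icc 1 n, A n i j ω) ∧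
  (∀ n (hle : weightSigma Wo n ≤ mΩ),
    iCondIndepFun (weightSigma Wo n) hle
      (fun (p : {p : ℕ × ℕ // p.1 ∈ Finset.Icc 1 n ∧ p.2 ∈ Finset.Icc 1 n ∧ p.1 ≤ p.2})
        (ω : Ω) => A n p.1.1 p.1.2 ω) P) ∧
  (∀ n, ∀ i ∈ Finset.Icc 1 n, ∀ j ∈ Finset.Icc 1 n, i ≤ j →
    (P[Set.indicator {ω | A n i j ω = 1} (fun _ => (1:ℝ)) | weightSigma Wo n]) =ᵐ[P]
      fun ω => min (Wo n i ω * Wo n j ω / (∑ l ∈ Finset.Icc 1 n, W l ω)) 1)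

/-- Decreasing order statistics for natural-number-valued degree sequences. -/
def IsOrderStatsN (D : ℕ → ℕ → Ω → ℕ) (Do : ℕ → ℕ → Ω → ℕ) : Prop :=
  (∀ n (ω : Ω), ∀ i ∈ Finset.Icc 1 n, ∀ j ∈ Finset.Icc 1 n, i ≤ j → Do n j ω ≤ Do n i ω) ∧
  (∀ n (ω : Ω), (Finset.Icc 1 n).val.map (fun i => Do n i ω)
      = (Finset.Icc 1 n).val.map (fun i => D n i ω))

/-!
Let `m` be a median of `F`. By Chebyshev's inequality, with probability tending to one more
than `n / 4` of the weights exceed `m`, and they are all positive, so `L(n) ≥ m n / 4`.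
Iterating `U(2t) ≤ 2^(1/r) U(t)`, valid for large `t` when `r < α`, gives `U(t) = O(t^(1/r))`,
hence `1 - F(x) = O(x^(-r))`; taking `2 < r < α` this makes `n (1 - F(√(m n / 4))) → 0`, so by
the union bound, with probability tending to one no weight exceeds `√(m n / 4)`, and then
`W_(1)(n)² ≤ m n / 4 ≤ L(n)`.
-/

open Asymptotics Finset

lemma le_mul_rpow_of_doubling {f : ℝ → ℝ} {t₁ β : ℝ} (ht₁ : 0 < t₁) (hβ : 0 ≤ β)
    (hmono : MonotoneOn f (Set.Ici t₁)) (hf₁ : 0 ≤ f t₁)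
    (hdouble : ∀ t ≥ t₁, f (t * 2) ≤ 2 ^ β * f t) :
    ∀ t ≥ t₁, f t ≤ 2 ^ β * f t₁ / t₁ ^ β * t ^ β := by
  have hpow : ∀ k : ℕ, f (t₁ * 2 ^ k) ≤ ((2 : ℝ) ^ k) ^ β * f t₁ := by
    intro k
    induction k with
    | zero => simp
    | succ k ih =>
      have hk : t₁ ≤ t₁ * 2 ^ k := le_mul_of_one_le_right ht₁.le (one_le_pow₀ one_le_two)
      calc f (t₁ * 2 ^ (k + 1)) = f (t₁ * 2 ^ k * 2) := by rw [pow_succ, mul_assoc]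
        _ ≤ 2 ^ β * f (t₁ * 2 ^ k) := hdouble _ hk
        _ ≤ 2 ^ β * (((2 : ℝ) ^ k) ^ β * f t₁) := by gcongr
        _ = ((2 : ℝ) ^ (k + 1)) ^ β * f t₁ := by
          rw [pow_succ, mul_rpow (by positivity) zero_le_two]; ring
  intro t ht
  obtain ⟨k, hk, hk'⟩ := exists_nat_pow_near ((one_le_div ht₁).2 ht) one_lt_two
  have hkt : t ≤ t₁ * 2 ^ (k + 1) := by rw [div_lt_iff₀ ht₁] at hk'; linarith
  calc f t ≤ f (t₁ * 2 ^ (k + 1)) := hmono ht (ht.trans hkt) hkt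
    _ ≤ ((2 : ℝ) ^ (k + 1)) ^ β * f t₁ := hpow (k + 1)
    _ = 2 ^ β * f t₁ * ((2 : ℝ) ^ k) ^ β := by
      rw [pow_succ, mul_rpow (by positivity) zero_le_two]; ring
    _ ≤ 2 ^ β * f t₁ * (t / t₁) ^ β := by gcongr
    _ = 2 ^ β * f t₁ / t₁ ^ β * t ^ β := by
      rw [div_rpow (by linarith) ht₁.le]; ring

section CDF

variable {F : ℝ → ℝ}

lemma IsCDF.le_one (hF : IsCDF F) (x : ℝ) : F x ≤ 1 :=
  hF.1.ge_of_tendsto hF.2.2.2 x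

lemma IsCDF.nonneg (hF : IsCDF F) (x : ℝ) : 0 ≤ F x :=
  hF.2.2.1 (min x 0) (min_le_right x 0) ▸ hF.1 (min_le_left x 0)

lemma IsCDF.bddBelow_setOf_le {y : ℝ} (hF : IsCDF F) (hy : 0 < y) : BddBelow {x | y ≤ F x} := by
  refine ⟨0, fun x (hx : y ≤ F x) => le_of_not_gt fun hx0 => ?_⟩
  rw [hF.2.2.1 x hx0.le] at hx
  linarith

lemma IsCDF.nonempty_setOf_le {y : ℝ} (hF : IsCDF F) (hy : y < 1) : {x | y ≤ F x}.Nonempty :=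
  (hF.2.2.2.eventually (eventually_ge_nhds hy)).exists

lemma IsCDF.le_apply_Finv {y : ℝ} (hF : IsCDF F) (hy₀ : 0 < y) (hy₁ : y < 1) :
    y ≤ F (Finv F y) :=
  (isClosed_Ici.preimage hF.2.1).csInf_mem (hF.nonempty_setOf_le hy₁) (hF.bddBelow_setOf_le hy₀)

lemma IsCDF.Finv_mono {y y' : ℝ} (hF : IsCDF F) (hy₀ : 0 < y) (hyy' : y ≤ y') (hy'₁ : y' < 1) :
    Finv F y ≤ Finv F y' :=
  csInf_le_csInf (hF.bddBelow_setOf_le hy₀) (hF.nonempty_setOf_le hy'₁) fun _ hx => hyy'.trans hx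

lemma IsCDF.exists_median (hF : IsCDF F) : ∃ m, 0 < m ∧ F m = 1 / 2 := by
  obtain ⟨m, hm⟩ := mem_range_of_exists_le_of_exists_ge hF.2.1
    ⟨0, by rw [hF.2.2.1 0 le_rfl]; norm_num⟩ (hF.nonempty_setOf_le (by norm_num : (1 : ℝ) / 2 < 1))
  refine ⟨m, lt_of_not_ge fun hm₀ => ?_, hm⟩
  rw [hF.2.2.1 m hm₀] at hm
  norm_num at hm

lemma one_sub_one_div_mem_Ioo {t : ℝ} (ht : 1 < t) : 1 - 1 / t ∈ Set.Ioo 0 1 := by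
  have : 1 / t < 1 := (div_lt_one (by linarith)).2 ht
  have : 0 < 1 / t := by positivity
  constructor <;> linarith

lemma IsCDF.one_sub_one_div_le_apply_Ufun {t : ℝ} (hF : IsCDF F) (ht : 1 < t) :
    1 - 1 / t ≤ F (Ufun F t) :=
  hF.le_apply_Finv (one_sub_one_div_mem_Ioo ht).1 (one_sub_one_div_mem_Ioo ht).2

lemma IsCDF.Ufun_pos {t : ℝ} (hF : IsCDF F) (ht : 1 < t) : 0 < Ufun F t := by
  by_contra! hU
  have := hF.one_sub_one_div_le_apply_Ufun ht
  rw [hF.2.2.1 _ hU] at this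
  exact (one_sub_one_div_mem_Ioo ht).1.not_ge this

lemma IsCDF.monotoneOn_Ufun (hF : IsCDF F) : MonotoneOn (Ufun F) (Set.Ioi 1) := by
  intro s hs t ht hst
  have hs₀ : (0 : ℝ) < s := lt_trans one_pos hs
  exact hF.Finv_mono (one_sub_one_div_mem_Ioo hs).1
    (by gcongr) (one_sub_one_div_mem_Ioo ht).2

lemma IsCDF.one_sub_le_of_Ufun_le {t x : ℝ} (hF : IsCDF F) (ht : 1 < t) (hx : Ufun F t ≤ x) :
    1 - F x ≤ 1 / t := by
  linarith [hF.one_sub_one_div_le_apply_Ufun ht, hF.1 hx]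

lemma IsCDF.exists_Ufun_le_mul_rpow {α β : ℝ} (hF : IsCDF F) (hRV : CondRV F α)
    (hβ : 1 / α < β) (hβ₀ : 0 ≤ β) : ∃ C > 0, ∀ᶠ t in atTop, Ufun F t ≤ C * t ^ β := by
  have h2 : (2 : ℝ) ^ (1 / α) < 2 ^ β := rpow_lt_rpow_of_exponent_lt one_lt_two hβ
  obtain ⟨t₁, ht₁⟩ := eventually_atTop.1
    (((hRV 2 two_pos).eventually (eventually_lt_nhds h2)).and (eventually_gt_atTop 1))
  have hU : ∀ t ≥ t₁, 0 < Ufun F t := fun t ht => hF.Ufun_pos (ht₁ t ht).2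
  have hdouble : ∀ t ≥ t₁, Ufun F (t * 2) ≤ 2 ^ β * Ufun F t := fun t ht =>
    ((div_lt_iff₀ (hU t ht)).1 (ht₁ t ht).1).le
  have ht₁1 : 1 < t₁ := (ht₁ t₁ le_rfl).2
  have hU₁ := hU t₁ le_rfl
  refine ⟨2 ^ β * Ufun F t₁ / t₁ ^ β, by positivity, eventually_atTop.2 ⟨t₁, ?_⟩⟩
  exact le_mul_rpow_of_doubling (by linarith) hβ₀
    (hF.monotoneOn_Ufun.mono fun _ ht => lt_of_lt_of_le ht₁1 ht) hU₁.le hdouble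

lemma IsCDF.one_sub_isBigO_rpow_neg {α r : ℝ} (hF : IsCDF F) (hRV : CondRV F α)
    (hr : 0 < r) (hrα : r < α) : (fun x => 1 - F x) =O[atTop] fun x => x ^ (-r) := by
  obtain ⟨C, hC, hU⟩ := hF.exists_Ufun_le_mul_rpow hRV
    (by rw [one_div]; exact (inv_lt_inv₀ (hr.trans hrα) hr).2 hrα) (inv_pos.2 hr).le
  -- `U t ≤ x` at `t = (x / C) ^ r`, so `1 - F x ≤ (x / C) ^ (-r)`
  have hs : Tendsto (fun x => (x / C) ^ r) atTop atTop :=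
    (tendsto_rpow_atTop hr).comp (tendsto_id.atTop_div_const hC)
  refine IsBigO.of_bound (C ^ r) ?_
  filter_upwards [hs.eventually hU, hs.eventually_gt_atTop 1, eventually_gt_atTop 0]
    with x hxU hx1 hx0
  rw [← rpow_mul (by positivity), mul_inv_cancel₀ hr.ne', rpow_one,
    mul_div_cancel₀ _ hC.ne'] at hxU
  rw [Real.norm_of_nonneg (sub_nonneg.2 (hF.le_one x)), Real.norm_of_nonneg (by positivity)]
  calc 1 - F x ≤ 1 / (x / C) ^ r := hF.one_sub_le_of_Ufun_le hx1 hxU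
    _ = C ^ r * x ^ (-r) := by
      rw [div_rpow hx0.le hC.le, rpow_neg hx0.le]; field_simp

lemma IsCDF.tendsto_sq_mul_one_sub {α : ℝ} (hF : IsCDF F) (hRV : CondRV F α) (hα : 2 < α) :
    Tendsto (fun x => x ^ 2 * (1 - F x)) atTop (nhds 0) := by
  obtain ⟨r, h2r, hrα⟩ := exists_between hα
  refine ((isBigO_refl (fun x : ℝ => x ^ 2) atTop).mul
    (hF.one_sub_isBigO_rpow_neg hRV (by linarith) hrα)).trans_tendsto ?_
  refine (tendsto_rpow_neg_atTop (by linarith : 0 < r - 2)).congr' ?_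
  filter_upwards [eventually_gt_atTop 0] with x hx
  rw [neg_sub, sub_eq_add_neg, rpow_add hx, rpow_two]

lemma IsCDF.tendsto_mul_one_sub_sqrt {α c : ℝ} (hF : IsCDF F) (hRV : CondRV F α)
    (hα : 2 < α) (hc : 0 < c) :
    Tendsto (fun n : ℕ => n * (1 - F √(c * n))) atTop (nhds 0) := by
  have hb : Tendsto (fun n : ℕ => √(c * n)) atTop atTop :=
    tendsto_sqrt_atTop.comp (tendsto_natCast_atTop_atTop.const_mul_atTop hc)
  convert ((hF.tendsto_sq_mul_one_sub hRV hα).comp hb).const_mul c⁻¹ using 1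
  · ext n
    simp only [Function.comp_apply]
    rw [sq_sqrt (by positivity)]
    field_simp
  · simp

end CDF

section Sampling

variable {P : Measure Ω} [IsProbabilityMeasure P]

lemma IIDWith.measure_lt {F : ℝ → ℝ} {W : ℕ → Ω → ℝ} (hW : IIDWith P F W) (hF : IsCDF F)
    (i : ℕ) (x : ℝ) : P {ω | x < W i ω} = ENNReal.ofReal (1 - F x) := by
  have : {ω | x < W i ω} = {ω | W i ω ≤ x}ᶜ := by ext; simp
  rw [this, prob_compl_eq_one_sub (measurableSet_le (hW.1 i) measurable_const), hW.2.2 i x,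
    ENNReal.ofReal_sub _ (hF.nonneg x), ENNReal.ofReal_one]

lemma measure_sum_le_sum_integral_sub_le {ι : Type*} {s : Finset ι} {X : ι → Ω → ℝ}
    (hX : ∀ i ∈ s, MemLp (X i) 2 P)
    (hindep : (s : Set ι).Pairwise fun i j => IndepFun (X i) (X j) P)
    {v ε : ℝ} (hvar : ∀ i ∈ s, variance (X i) P ≤ v) (hε : 0 < ε) :
    P {ω | ∑ i ∈ s, X i ω ≤ ∑ i ∈ s, P[X i] - ε} ≤ ENNReal.ofReal (#s * v / ε ^ 2) := by
  have hmean : P[∑ i ∈ s, X i] = ∑ i ∈ s, P[X i] := by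
    simp only [Finset.sum_apply]
    exact integral_finsetSum s fun i hi => (hX i hi).integrable one_le_two
  calc _ ≤ P {ω | ε ≤ |(∑ i ∈ s, X i) ω - P[∑ i ∈ s, X i]|} := by
        refine measure_mono fun ω (hω : ∑ i ∈ s, X i ω ≤ _ - ε) => ?_
        show ε ≤ |(∑ i ∈ s, X i) ω - P[∑ i ∈ s, X i]|
        rw [hmean, Finset.sum_apply, abs_sub_comm]
        exact le_abs.2 (Or.inl (by linarith))
    _ ≤ ENNReal.ofReal (variance (∑ i ∈ s, X i) P / ε ^ 2) :=
        meas_ge_le_variance_div_sq (memLp_finsetSum' s hX) hε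
    _ ≤ ENNReal.ofReal (#s * v / ε ^ 2) := by
        rw [IndepFun.variance_sum hX hindep]
        gcongr
        simpa using Finset.sum_le_sum hvar

lemma tendsto_measure_card_gt_le {W : ℕ → Ω → ℝ} (hmeas : ∀ i, Measurable (W i))
    (hindep : iIndepFun W P) {m p : ℝ} (hp : 0 < p)
    (hexc : ∀ i, P {ω | m < W i ω} = ENNReal.ofReal p) :
    Tendsto (fun n : ℕ => P {ω | (#{i ∈ Icc 1 n | m < W i ω} : ℝ) ≤ n * p / 2})
      atTop (nhds 0) := by
  set g : ℝ → ℝ := (Set.Ioi m).indicator 1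
  have hg : Measurable g := measurable_const.indicator measurableSet_Ioi
  have hcount : ∀ n ω, (#{i ∈ Icc 1 n | m < W i ω} : ℝ) = ∑ i ∈ Icc 1 n, (g ∘ W i) ω := by
    intro n ω
    rw [Finset.natCast_card_filter]
    simp only [Function.comp_apply, g, Set.indicator_apply, Set.mem_Ioi, Pi.one_apply]
  have hmemLp : ∀ i, MemLp (g ∘ W i) 2 P := fun i =>
    MemLp.of_bound (hg.comp (hmeas i)).aestronglyMeasurable 1 (ae_of_all _ fun ω => by
      simp only [Function.comp_apply, g, Set.indicator_apply]; split_ifs <;> simp)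
  have hmean : ∀ i, P[g ∘ W i] = p := by
    intro i
    have : g ∘ W i = (W i ⁻¹' Set.Ioi m).indicator 1 := rfl
    rw [this, integral_indicator_one ((hmeas i) measurableSet_Ioi), measureReal_def]
    exact (congrArg ENNReal.toReal (hexc i)).trans (ENNReal.toReal_ofReal hp.le)
  have hvar : ∀ i, variance (g ∘ W i) P ≤ p := by
    intro i
    refine (variance_le_expectation_sq (hg.comp (hmeas i)).aestronglyMeasurable).trans_eq ?_
    have : (g ∘ W i) ^ 2 = g ∘ W i := by
      ext ω
      simp only [Pi.pow_apply, Function.comp_apply, g, Set.indicator_apply]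
      split_ifs <;> simp
    rw [this, hmean]
  have hbound : ∀ n : ℕ, 1 ≤ n → P {ω | (#{i ∈ Icc 1 n | m < W i ω} : ℝ) ≤ n * p / 2}
      ≤ ENNReal.ofReal (4 / p / n) := by
    intro n hn
    have hn' : (0 : ℝ) < n := by exact_mod_cast hn
    have hsum : ∑ i ∈ Icc 1 n, P[g ∘ W i] = n * p := by
      rw [Finset.sum_congr rfl fun i _ => hmean i]
      simp
    calc _ ≤ P {ω | ∑ i ∈ Icc 1 n, (g ∘ W i) ω ≤ ∑ i ∈ Icc 1 n, P[g ∘ W i] - n * p / 2} := by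
          refine measure_mono fun ω hω => ?_
          simp only [Set.mem_ofPred_eq] at hω ⊢
          rw [hsum, ← hcount]
          linarith
      _ ≤ ENNReal.ofReal (#(Icc 1 n) * p / (n * p / 2) ^ 2) :=
          measure_sum_le_sum_integral_sub_le (fun i _ => hmemLp i)
            (fun i _ j _ hij => (hindep.indepFun hij).comp hg hg) (fun i _ => hvar i)
            (by positivity)
      _ = ENNReal.ofReal (4 / p / n) := by
          rw [Nat.card_Icc, add_tsub_cancel_right]
          congr 1
          field_simp
          ring
  refine tendsto_of_tendsto_of_tendsto_of_le_of_le' tendsto_const_nhds ?_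
    (Eventually.of_forall fun _ => zero_le) ((eventually_ge_atTop 1).mono hbound)
  simpa using ENNReal.tendsto_ofReal (tendsto_const_div_atTop_nhds_zero_nat (4 / p))

lemma IIDWith.tendsto_measure_exists_gt {F : ℝ → ℝ} {W : ℕ → Ω → ℝ} (hW : IIDWith P F W)
    (hF : IsCDF F) {b : ℕ → ℝ} (hb : Tendsto (fun n : ℕ => n * (1 - F (b n))) atTop (nhds 0)) :
    Tendsto (fun n : ℕ => P (⋃ i ∈ Icc 1 n, {ω | b n < W i ω})) atTop (nhds 0) := by
  refine tendsto_of_tendsto_of_tendsto_of_le_of_le tendsto_const_nhds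
    (ENNReal.ofReal_zero ▸ ENNReal.tendsto_ofReal hb) (fun _ => zero_le) fun n => ?_
  calc _ ≤ ∑ i ∈ Icc 1 n, P {ω | b n < W i ω} := measure_biUnion_finset_le _ _
    _ = ENNReal.ofReal (n * (1 - F (b n))) := by
      simp only [hW.measure_lt hF, Finset.sum_const, Nat.card_Icc, add_tsub_cancel_right,
        nsmul_eq_mul]
      rw [ENNReal.ofReal_mul (Nat.cast_nonneg _), ENNReal.ofReal_natCast]

lemma IsOrderStats.exists_eq_first {W : ℕ → Ω → ℝ} {Wo : ℕ → ℕ → Ω → ℝ}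
    (hWo : IsOrderStats W Wo) {n : ℕ} (hn : 1 ≤ n) (ω : Ω) :
    ∃ j ∈ Icc 1 n, Wo n 1 ω = W j ω := by
  have hmem : Wo n 1 ω ∈ (Icc 1 n).val.map (fun i => Wo n i ω) :=
    Multiset.mem_map.2 ⟨1, by simpa using hn, rfl⟩
  rw [hWo.2.2 n ω] at hmem
  obtain ⟨j, hj, hjeq⟩ := Multiset.mem_map.1 hmem
  exact ⟨j, hj, hjeq.symm⟩

lemma sq_le_sum_of_le_of_card_gt {ι : Type*} {s : Finset ι} {w : ι → ℝ} {j : ι} (hj : j ∈ s)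
    {m b : ℝ} (hw : ∀ i ∈ s, 0 ≤ w i) (hwb : ∀ i ∈ s, w i ≤ b)
    (hb : b ^ 2 ≤ m * #{i ∈ s | m < w i}) : w j ^ 2 ≤ ∑ i ∈ s, w i :=
  calc w j ^ 2 ≤ b ^ 2 := pow_le_pow_left₀ (hw j hj) (hwb j hj) 2
    _ ≤ m * #{i ∈ s | m < w i} := hb
    _ ≤ ∑ i ∈ s with m < w i, w i := by
      rw [mul_comm, ← nsmul_eq_mul]
      exact Finset.card_nsmul_le_sum _ _ _ fun i hi => (Finset.mem_filter.1 hi).2.le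
    _ ≤ ∑ i ∈ s, w i :=
      Finset.sum_le_sum_of_subset_of_nonneg (Finset.filter_subset _ _) fun i hi _ => hw i hi

lemma IsOrderStats.compl_setOf_sq_first_le_sum_subset {W : ℕ → Ω → ℝ} {Wo : ℕ → ℕ → Ω → ℝ}
    (hWo : IsOrderStats W Wo) {n : ℕ} (hn : 1 ≤ n) {m b c : ℝ} (hm : 0 ≤ m) (hb : b ^ 2 ≤ m * c) :
    {ω | Wo n 1 ω ^ 2 ≤ ∑ i ∈ Icc 1 n, W i ω}ᶜ ⊆
      ({ω | (#{i ∈ Icc 1 n | m < W i ω} : ℝ) ≤ c} ∪ ⋃ i ∈ Icc 1 n, {ω | b < W i ω}) ∪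
        ⋃ i ∈ Icc 1 n, {ω | W i ω ≤ 0} := by
  intro ω hω
  by_contra hgood
  simp only [Set.mem_union, Set.mem_iUnion, Set.mem_ofPred_eq, not_or, not_exists, not_and,
    not_le, not_lt, exists_prop] at hgood
  obtain ⟨⟨hcount, hle⟩, hpos⟩ := hgood
  obtain ⟨j, hj, hjeq⟩ := hWo.exists_eq_first hn ω
  refine hω ?_
  rw [Set.mem_ofPred_eq, hjeq]
  exact sq_le_sum_of_le_of_card_gt hj (fun i hi => (hpos i hi).le) hle (hb.trans (by gcongr))

end Sampling

section Events

variable {P : Measure Ω} {l : Filter ℕ}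

lemma tendsto_measure_union_nhds_zero {A B : ℕ → Set Ω}
    (hA : Tendsto (fun n => P (A n)) l (nhds 0)) (hB : Tendsto (fun n => P (B n)) l (nhds 0)) :
    Tendsto (fun n => P (A n ∪ B n)) l (nhds 0) :=
  tendsto_of_tendsto_of_tendsto_of_le_of_le tendsto_const_nhds (by simpa using hA.add hB)
    (fun _ => zero_le) fun _ => measure_union_le _ _

lemma tendsto_measure_nhds_one_of_compl_subset [IsProbabilityMeasure P] {E A : ℕ → Set Ω}
    (hE : ∀ n, MeasurableSet (E n)) (hsub : ∀ᶠ n in l, (E n)ᶜ ⊆ A n)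
    (hA : Tendsto (fun n => P (A n)) l (nhds 0)) :
    Tendsto (fun n => P (E n)) l (nhds 1) := by
  have hcompl : Tendsto (fun n => P (E n)ᶜ) l (nhds 0) :=
    tendsto_of_tendsto_of_tendsto_of_le_of_le' tendsto_const_nhds hA
      (Eventually.of_forall fun _ => zero_le) (hsub.mono fun _ h => measure_mono h)
  have h := ENNReal.Tendsto.sub tendsto_const_nhds hcompl (Or.inl ENNReal.one_ne_top)
  rw [tsub_zero] at h
  refine h.congr fun n => ?_
  rw [← prob_compl_eq_one_sub (hE n).compl, compl_compl]

end Events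

theorem stmt10 (F : ℝ → ℝ) (hF : IsCDF F) (α : ℝ) (hα : 2 < α) (hRV : CondRV F α)
    (P : Measure Ω) [IsProbabilityMeasure P] (W : ℕ → Ω → ℝ) (Wo : ℕ → ℕ → Ω → ℝ)
    (hW : IIDWith P F W) (hWo : IsOrderStats W Wo) :
    Tendsto (fun n : ℕ => P {ω | (Wo n 1 ω) ^ 2 ≤ ∑ i ∈ Finset.Icc 1 n, W i ω})
      atTop (nhds 1) := by
  obtain ⟨m, hm, hFm⟩ := hF.exists_median
  set b : ℕ → ℝ := fun n => √(m / 4 * n)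
  have hfew : Tendsto (fun n : ℕ => P {ω | (#{i ∈ Icc 1 n | m < W i ω} : ℝ) ≤ n * (1 / 2) / 2})
      atTop (nhds 0) :=
    tendsto_measure_card_gt_le hW.1 hW.2.1 one_half_pos fun i => by
      rw [hW.measure_lt hF, hFm]; norm_num
  have hlarge : Tendsto (fun n : ℕ => P (⋃ i ∈ Icc 1 n, {ω | b n < W i ω})) atTop (nhds 0) :=
    hW.tendsto_measure_exists_gt hF (hF.tendsto_mul_one_sub_sqrt hRV hα (by positivity))
  have hnonpos : ∀ n, P (⋃ i ∈ Icc 1 n, {ω | W i ω ≤ 0}) = 0 := fun n =>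
    (measure_biUnion_null_iff (Finset.countable_toSet _)).2 fun i _ => by
      rw [hW.2.2 i 0, hF.2.2.1 0 le_rfl, ENNReal.ofReal_zero]
  have hb : ∀ n : ℕ, b n ^ 2 ≤ m * (n * (1 / 2) / 2) := fun n => by
    rw [sq_sqrt (by positivity)]
    linarith
  refine tendsto_measure_nhds_one_of_compl_subset
    (fun n => measurableSet_le ((hWo.1 n 1).pow_const 2) (measurable_sum _ fun i _ => hW.1 i))
    ((eventually_ge_atTop 1).mono fun n hn =>
      hWo.compl_setOf_sq_first_le_sum_subset hn hm.le (hb n))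
    (tendsto_measure_union_nhds_zero (tendsto_measure_union_nhds_zero hfew hlarge) ?_)
  simp only [hnonpos]
  exact tendsto_const_nhds
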